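/- Let R_0 → R_1 → R_2 → ⋯ be a direct system of commutative rings with transition ring homomorphisms t_i : R_i → R_{i+1}, and suppose each t_i admits an R_i-linear splitting, i.e., an R_i-linear map σ_i : R_{i+1} → R_i with σ_i ∘ t_i = id. Then the natural ring map from R_0 to the colimit R_∞ = colim_i R_i admits an R_0-linear splitting σ : R_∞ → R_0, i.e., σ composed with the natural map R_0 → R_∞ is the identity of R_0. -/

import Mathlib

/-!
Composing the splittings `σ 0 ∘ ⋯ ∘ σ (i-1)` gives additive maps `R i → R 0`, compatible with
the transition maps and `R 0`-linear for the `R 0`-module structure through `R 0 → R i`.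
Compatible families of additive maps descend to the colimit, and linearity can be checked at a
finite stage, where `φ 0 x * φ k y = φ k (tIter 0 k x * y)`.
-/

universe u

section SequentialColimit

variable {R : ℕ → Type*} [∀ i, Semiring (R i)] {t : ∀ i, R i →+* R (i + 1)}
  {tIter : ∀ i k, R i →+* R (i + k)}

theorem apply_tIter_of_compatible (htIter0 : ∀ i, tIter i 0 = RingHom.id (R i))
    (htIterS : ∀ i k, tIter i (k + 1) = (t (i + k)).comp (tIter i k))
    {X : Type*} (F : ∀ i, R i → X) (hF : ∀ i x, F (i + 1) (t i x) = F i x)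
    (i k : ℕ) (x : R i) : F (i + k) (tIter i k x) = F i x := by
  induction k with
  | zero => rw [htIter0]; rfl
  | succ k ih => rw [htIterS, RingHom.comp_apply]; exact (hF _ _).trans ih

variable {S : Type*} [Semiring S] {φ : ∀ i, R i →+* S}

theorem apply_tIter_of_comp_eq (htIter0 : ∀ i, tIter i 0 = RingHom.id (R i))
    (htIterS : ∀ i k, tIter i (k + 1) = (t (i + k)).comp (tIter i k))
    (hφ : ∀ i, (φ (i + 1)).comp (t i) = φ i) (i k : ℕ) (x : R i) :
    φ (i + k) (tIter i k x) = φ i x :=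
  apply_tIter_of_compatible htIter0 htIterS (fun i ↦ φ i) (fun i ↦ RingHom.congr_fun (hφ i))
    i k x

theorem exists_apply_eq_of_le (htIter0 : ∀ i, tIter i 0 = RingHom.id (R i))
    (htIterS : ∀ i k, tIter i (k + 1) = (t (i + k)).comp (tIter i k))
    (hφ : ∀ i, (φ (i + 1)).comp (t i) = φ i)
    (hsurj : ∀ s : S, ∃ (i : ℕ) (x : R i), φ i x = s) (s : S) (i : ℕ) :
    ∃ (k : ℕ) (y : R (i + k)), φ (i + k) y = s := by
  obtain ⟨j, y, rfl⟩ := hsurj s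
  rcases le_total i j with hij | hji
  · obtain ⟨k, rfl⟩ := Nat.exists_eq_add_of_le hij
    exact ⟨k, y, rfl⟩
  · obtain ⟨k, rfl⟩ := Nat.exists_eq_add_of_le hji
    exact ⟨0, tIter j k y, apply_tIter_of_comp_eq htIter0 htIterS hφ j k y⟩

theorem apply_eq_apply_of_compatible (htIter0 : ∀ i, tIter i 0 = RingHom.id (R i))
    (htIterS : ∀ i k, tIter i (k + 1) = (t (i + k)).comp (tIter i k))
    (hφ : ∀ i, (φ (i + 1)).comp (t i) = φ i)
    (heq : ∀ (i : ℕ) (x y : R i), φ i x = φ i y → ∃ k, tIter i k x = tIter i k y)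
    {X : Type*} (F : ∀ i, R i → X) (hF : ∀ i x, F (i + 1) (t i x) = F i x)
    {i j : ℕ} (x : R i) (y : R j) (hxy : φ i x = φ j y) : F i x = F j y := by
  have hFF := apply_tIter_of_compatible htIter0 htIterS F hF
  have aligned :
      ∀ i k (x : R i) (y : R (i + k)), φ i x = φ (i + k) y → F i x = F (i + k) y := by
    intro i k x y h
    obtain ⟨m, hm⟩ := heq _ _ _ ((apply_tIter_of_comp_eq htIter0 htIterS hφ i k x).trans h)
    have := congrArg (F (i + k + m)) hm
    rwa [hFF, hFF, hFF] at this
  rcases le_total i j with hij | hji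
  · obtain ⟨k, rfl⟩ := Nat.exists_eq_add_of_le hij
    exact aligned i k x y hxy
  · obtain ⟨k, rfl⟩ := Nat.exists_eq_add_of_le hji
    exact (aligned j k y x hxy.symm).symm

theorem exists_addMonoidHom_comp_eq (htIter0 : ∀ i, tIter i 0 = RingHom.id (R i))
    (htIterS : ∀ i k, tIter i (k + 1) = (t (i + k)).comp (tIter i k))
    (hφ : ∀ i, (φ (i + 1)).comp (t i) = φ i)
    (hsurj : ∀ s : S, ∃ (i : ℕ) (x : R i), φ i x = s)
    (heq : ∀ (i : ℕ) (x y : R i), φ i x = φ i y → ∃ k, tIter i k x = tIter i k y)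
    {M : Type*} [AddGroup M] (F : ∀ i, R i →+ M) (hF : ∀ i x, F (i + 1) (t i x) = F i x) :
    ∃ f : S →+ M, ∀ i x, f (φ i x) = F i x := by
  choose lvl lift hlift using id hsurj
  have hf : ∀ i x, F (lvl (φ i x)) (lift (φ i x)) = F i x := fun i x ↦
    apply_eq_apply_of_compatible htIter0 htIterS hφ heq (fun i ↦ F i) hF _ _ (hlift _)
  refine ⟨AddMonoidHom.mk' (fun s ↦ F (lvl s) (lift s)) fun s₁ s₂ ↦ ?_, hf⟩
  obtain ⟨i, x, rfl⟩ := hsurj s₁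
  obtain ⟨k, y, rfl⟩ := exists_apply_eq_of_le htIter0 htIterS hφ hsurj s₂ i
  rw [← apply_tIter_of_comp_eq htIter0 htIterS hφ i k x, ← map_add]
  simp only [hf, map_add]

end SequentialColimit

section SplittingToZero

variable {R : ℕ → Type*} [∀ i, CommSemiring (R i)]

def splittingToZero (σ : ∀ i, R (i + 1) →+ R i) : ∀ i, R i →+ R 0
  | 0 => AddMonoidHom.id (R 0)
  | i + 1 => (splittingToZero σ i).comp (σ i)

variable {t : ∀ i, R i →+* R (i + 1)} {σ : ∀ i, R (i + 1) →+ R i}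

theorem splittingToZero_apply_map (hσ : ∀ i x, σ i (t i x) = x) (i : ℕ) (x : R i) :
    splittingToZero σ (i + 1) (t i x) = splittingToZero σ i x :=
  congrArg (splittingToZero σ i) (hσ i x)

theorem splittingToZero_tIter_mul {tIter : ∀ i k, R i →+* R (i + k)}
    (htIter0 : ∀ i, tIter i 0 = RingHom.id (R i))
    (htIterS : ∀ i k, tIter i (k + 1) = (t (i + k)).comp (tIter i k))
    (hσ : ∀ i x y, σ i (t i x * y) = x * σ i y) (k : ℕ) (a : R 0) (y : R (0 + k)) :
    splittingToZero σ (0 + k) (tIter 0 k a * y) = a * splittingToZero σ (0 + k) y := by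
  induction k with
  | zero => rw [htIter0]; rfl
  | succ k ih =>
    rw [htIterS, RingHom.comp_apply]
    change splittingToZero σ (0 + k) (σ (0 + k) (t (0 + k) (tIter 0 k a) * y)) = _
    rw [hσ, ih]
    rfl

end SplittingToZero

theorem stmt6 (R : ℕ → Type u) [∀ i, CommRing (R i)]
    (t : ∀ i, R i →+* R (i + 1))
    (hsplit : ∀ i, ∃ σ : R (i + 1) →+ R i,
      (∀ (x : R i) (y : R (i + 1)), σ (t i x * y) = x * σ y) ∧ ∀ x : R i, σ (t i x) = x)
    (tIter : ∀ i k, R i →+* R (i + k))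
    (htIter0 : ∀ i, tIter i 0 = RingHom.id (R i))
    (htIterS : ∀ i k, tIter i (k + 1) = (t (i + k)).comp (tIter i k))
    (S : Type u) [CommRing S] (φ : ∀ i, R i →+* S)
    (hφ : ∀ i, (φ (i + 1)).comp (t i) = φ i)
    (hsurj : ∀ s : S, ∃ (i : ℕ) (x : R i), φ i x = s)
    (heq : ∀ (i : ℕ) (x y : R i), φ i x = φ i y ↔ ∃ k, tIter i k x = tIter i k y) :
    ∃ σ : S →+ R 0,
      (∀ (x : R 0) (s : S), σ (φ 0 x * s) = x * σ s) ∧ ∀ x : R 0, σ (φ 0 x) = x := by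
  choose σ hσmul hσid using hsplit
  obtain ⟨f, hf⟩ := exists_addMonoidHom_comp_eq htIter0 htIterS hφ hsurj
    (fun i x y ↦ (heq i x y).1) (splittingToZero σ) (splittingToZero_apply_map hσid)
  refine ⟨f, fun x s ↦ ?_, hf 0⟩
  obtain ⟨k, y, rfl⟩ := exists_apply_eq_of_le htIter0 htIterS hφ hsurj s 0
  rw [← apply_tIter_of_comp_eq htIter0 htIterS hφ 0 k x, ← map_mul, hf, hf,
    splittingToZero_tIter_mul htIter0 htIterS hσmul]
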